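/- Let d ≥ 1, m ≥ 1 and ε > 0. The function ψ_{u,m,ε}(x) = ψ_{ℓ,m}(x) · ln_m(|x|)^{−ε/2}, where ψ_{ℓ,m}(x) = |x|^{−d/2} ∏_{j=1}^{m} ln_j(|x|)^{−1/2}, is smooth on {x ∈ ℝ^d : |x| > e_m} and satisfies there Δψ_{u,m,ε}(x) = Y_{m,ε}(x) · ψ_{u,m,ε}(x), where Y_{m,ε}(x) = W_m(x) + (ε²/(4|x|²)) ∏_{k=1}^{m} ln_k(|x|)^{−2} + (ε/|x|²) ∏_{k=1}^{m} ln_k(|x|)^{−1} + (ε/|x|²) Σ_{j=1}^{m} ∏_{k=1}^{m} ∏_{t=1}^{j} ln_k(|x|)^{−1} ln_t(|x|)^{−1}, and W_m(x) = d(4−d)/(4|x|²) + (1/|x|²) Σ_{j=1}^{m} ∏_{k=1}^{j} ln_k(|x|)^{−1} + (1/(4|x|²)) ( Σ_{j=1}^{m} ∏_{k=1}^{j} ln_k(|x|)^{−1} )² + (1/(2|x|²)) Σ_{j=1}^{m} Σ_{l=1}^{j} ∏_{s=1}^{l} ∏_{t=1}^{j} ln_s(|x|)^{−1} ln_t(|x|)^{−1}.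 -/

import Mathlib

open MeasureTheory Real Filter

noncomputable section

/-- Iterated exponentials: `iterExp 0 = 1`, `iterExp (k+1) = exp (iterExp k)`,
so `iterExp m = e_m`. -/
def iterExp : ℕ → ℝ
  | 0 => 1
  | n + 1 => Real.exp (iterExp n)

/-- Iterated logarithms: `iterLog 1 r = log r`, `iterLog (k+1) r = log (iterLog k r)`. -/
def iterLog : ℕ → ℝ → ℝ
  | 0, r => r
  | n + 1, r => Real.log (iterLog n r)

/-- The Laplacian `Δ f = ∑ i ∂²f/∂x_i²` on `ℝ^d`. -/
def laplacian {d : ℕ} (f : EuclideanSpace ℝ (Fin d) → ℝ) (x : EuclideanSpace ℝ (Fin d)) : ℝ :=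
  ∑ i : Fin d, fderiv ℝ (fun y => fderiv ℝ f y (EuclideanSpace.single i 1)) x
    (EuclideanSpace.single i 1)

/-- The potential `W_m`, as a function of `r = |x|`. -/
def Wpot (d m : ℕ) (r : ℝ) : ℝ :=
  (d : ℝ) * (4 - (d : ℝ)) / (4 * r ^ 2)
  + (1 / r ^ 2) * ∑ j ∈ Finset.Icc 1 m, ∏ k ∈ Finset.Icc 1 j, (iterLog k r)⁻¹
  + (1 / (4 * r ^ 2)) * (∑ j ∈ Finset.Icc 1 m, ∏ k ∈ Finset.Icc 1 j, (iterLog k r)⁻¹) ^ 2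
  + (1 / (2 * r ^ 2)) * ∑ j ∈ Finset.Icc 1 m, ∑ l ∈ Finset.Icc 1 j,
      (∏ s ∈ Finset.Icc 1 l, (iterLog s r)⁻¹) * (∏ t ∈ Finset.Icc 1 j, (iterLog t r)⁻¹)

/-- The potential `Y_{m,ε}`, as a function of `r = |x|`. -/
def Ypot (d m : ℕ) (ε r : ℝ) : ℝ :=
  Wpot d m r
  + (ε ^ 2 / (4 * r ^ 2)) * ∏ k ∈ Finset.Icc 1 m, ((iterLog k r) ^ 2)⁻¹
  + (ε / r ^ 2) * ∏ k ∈ Finset.Icc 1 m, (iterLog k r)⁻¹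
  + (ε / r ^ 2) * ∑ j ∈ Finset.Icc 1 m,
      (∏ k ∈ Finset.Icc 1 m, (iterLog k r)⁻¹) * (∏ t ∈ Finset.Icc 1 j, (iterLog t r)⁻¹)


/-! ### Auxiliary development -/

lemma one_le_iterExp (k : ℕ) : 1 ≤ iterExp k := by
  induction k with
  | zero => simp [iterExp]
  | succ n ih => exact le_trans ih (by
      simpa [iterExp] using (Real.add_one_le_exp (iterExp n)).trans' (by linarith))

lemma iterExp_pos (k : ℕ) : 0 < iterExp k := lt_of_lt_of_le one_pos (one_le_iterExp k)

lemma iterExp_lt_iterLog {m : ℕ} {r : ℝ} (hr : iterExp m < r) :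
    ∀ j, j ≤ m → iterExp (m - j) < iterLog j r := by
  intro j
  induction j with
  | zero => intro _; simpa [iterLog] using hr
  | succ n ih =>
    intro h
    have hn : n ≤ m := Nat.le_of_succ_le h
    have h1 := ih hn
    have hmn : m - n = (m - (n+1)) + 1 := by omega
    have : iterExp (m - (n+1)) = Real.log (iterExp (m - n)) := by
      rw [hmn]; simp [iterExp, Real.log_exp]
    show iterExp (m - (n+1)) < Real.log (iterLog n r)
    rw [this]
    exact Real.log_lt_log (iterExp_pos _) h1

lemma one_lt_iterLog {m : ℕ} {r : ℝ} (hr : iterExp m < r) {j : ℕ} (hj : j ≤ m) :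
    1 < iterLog j r :=
  lt_of_le_of_lt (one_le_iterExp _) (iterExp_lt_iterLog hr j hj)

lemma iterLog_pos {m : ℕ} {r : ℝ} (hr : iterExp m < r) {j : ℕ} (hj : j ≤ m + 1) :
    0 < iterLog j r := by
  rcases Nat.lt_or_ge j (m+1) with h | h
  · exact lt_trans one_pos (one_lt_iterLog hr (Nat.lt_succ_iff.1 h))
  · have hj' : j = m + 1 := le_antisymm hj h
    subst hj'
    show 0 < Real.log (iterLog m r)
    exact Real.log_pos (one_lt_iterLog hr le_rfl)

lemma rpos {m : ℕ} {r : ℝ} (hr : iterExp m < r) : 0 < r :=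
  lt_of_lt_of_le (iterExp_pos m) (le_of_lt hr)

lemma contDiffAt_iterLog {r : ℝ} :
    ∀ k, (∀ i, i < k → iterLog i r ≠ 0) → ContDiffAt ℝ (⊤ : ℕ∞) (iterLog k) r := by
  intro k
  induction k with
  | zero => intro _; exact contDiffAt_id
  | succ n ih =>
    intro h
    have h1 := ih (fun i hi => h i (Nat.lt_succ_of_lt hi))
    exact h1.log (h n (Nat.lt_succ_self n))

def iLP (m : ℕ) (r : ℝ) : ℝ := ∏ k ∈ Finset.Icc 1 m, (iterLog k r)⁻¹
def iLT (m : ℕ) (r : ℝ) : ℝ := ∑ k ∈ Finset.Icc 1 m, iLP k r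
def iLQ (m : ℕ) (r : ℝ) : ℝ := ∑ j ∈ Finset.Icc 1 m, iLP j r * iLT j r

lemma iLP_succ (j : ℕ) (r : ℝ) : iLP (j+1) r = iLP j r * (iterLog (j+1) r)⁻¹ := by
  simp [iLP, Finset.prod_Icc_succ_top (Nat.succ_le_succ (Nat.zero_le j))]

lemma iLT_succ (j : ℕ) (r : ℝ) : iLT (j+1) r = iLT j r + iLP (j+1) r := by
  simp [iLT, Finset.sum_Icc_succ_top (Nat.succ_le_succ (Nat.zero_le j))]

lemma hasDerivAt_iterLog_succ {m : ℕ} {r : ℝ} (hr : iterExp m < r) :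
    ∀ j, j ≤ m → HasDerivAt (iterLog (j+1)) (r⁻¹ * iLP j r) r := by
  intro j
  induction j with
  | zero =>
    intro _
    have : HasDerivAt (iterLog 1) r⁻¹ r := by
      have h := Real.hasDerivAt_log (ne_of_gt (rpos hr))
      exact h.congr_deriv rfl |>.congr_of_eventuallyEq (by
        filter_upwards with y; rfl)
    simpa [iLP] using this
  | succ n ih =>
    intro h
    have hn : n ≤ m := Nat.le_of_succ_le h
    have hL := ih hn
    have hpos : iterLog (n+1) r ≠ 0 := ne_of_gt (iterLog_pos hr (by omega))
    have := hL.log hpos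
    have heq : (fun y => Real.log (iterLog (n+1) y)) = iterLog (n+2) := rfl
    rw [heq] at this
    convert this using 1
    rw [iLP_succ]
    field_simp

lemma hasDerivAt_iLP {m : ℕ} {r : ℝ} (hr : iterExp m < r) :
    ∀ j, j ≤ m → HasDerivAt (iLP j) (-(r⁻¹ * iLP j r * iLT j r)) r := by
  intro j
  induction j with
  | zero =>
    intro _
    have : (iLP 0) = fun _ : ℝ => (1:ℝ) := by funext s; simp [iLP]
    rw [this]
    simpa [iLT] using hasDerivAt_const r (1:ℝ)
  | succ n ih =>
    intro h
    have hn : n ≤ m := Nat.le_of_succ_le h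
    have hP := ih hn
    have hL := hasDerivAt_iterLog_succ hr n hn
    have hLpos : (0:ℝ) < iterLog (n+1) r := iterLog_pos hr (by omega)
    have hLinv := hL.inv (ne_of_gt hLpos)
    have hmul := hP.mul hLinv
    change HasDerivAt (fun y => iLP n y * (iterLog (n+1) y)⁻¹) (-(r⁻¹ * iLP n r * iLT n r) * (iterLog (n+1) r)⁻¹ + iLP n r * (-(r⁻¹ * iLP n r) / iterLog (n+1) r ^ 2)) r at hmul
    have heq : (fun y => iLP n y * (iterLog (n+1) y)⁻¹) = iLP (n+1) := by
      funext s; rw [iLP_succ]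
    rw [heq] at hmul
    convert hmul using 1
    rw [iLP_succ, iLT_succ, iLP_succ, div_eq_mul_inv, sq, mul_inv]
    ring

lemma hasDerivAt_iLT {m : ℕ} {r : ℝ} (hr : iterExp m < r) :
    HasDerivAt (iLT m) (-(r⁻¹ * iLQ m r)) r := by
  have : HasDerivAt (fun s => ∑ k ∈ Finset.Icc 1 m, iLP k s)
      (∑ k ∈ Finset.Icc 1 m, -(r⁻¹ * iLP k r * iLT k r)) r :=
    HasDerivAt.fun_sum (fun k hk => hasDerivAt_iLP hr k (Finset.mem_Icc.1 hk).2)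
  refine this.congr_deriv (Eq.symm ?_)
  rw [iLQ, Finset.mul_sum, ← Finset.sum_neg_distrib]
  exact Finset.sum_congr rfl fun k _ => by ring

def hfun (d m : ℕ) (ε : ℝ) (r : ℝ) : ℝ :=
  (-(d:ℝ)/2) * Real.log r - (1/2) * ∑ j ∈ Finset.Icc 1 m, iterLog (j+1) r
    - (ε/2) * iterLog (m+1) r

def Bfun (d m : ℕ) (ε : ℝ) (r : ℝ) : ℝ := -((d:ℝ) + iLT m r + ε * iLP m r)/2
def Bder (m : ℕ) (ε : ℝ) (r : ℝ) : ℝ := (2*r)⁻¹ * (iLQ m r + ε * (iLP m r * iLT m r))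
def Afun (d m : ℕ) (ε : ℝ) (r : ℝ) : ℝ := r⁻¹ * Bfun d m ε r
def Cfun (d m : ℕ) (ε : ℝ) (r : ℝ) : ℝ := -(r^2)⁻¹ * Bfun d m ε r + r⁻¹ * Bder m ε r

lemma hasDerivAt_hfun (d m : ℕ) (ε : ℝ) {r : ℝ} (hr : iterExp m < r) :
    HasDerivAt (hfun d m ε) (Afun d m ε r) r := by
  have h1 : HasDerivAt (fun s => (-(d:ℝ)/2) * Real.log s) ((-(d:ℝ)/2) * r⁻¹) r :=
    (Real.hasDerivAt_log (ne_of_gt (rpos hr))).const_mul _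
  have h2 : HasDerivAt (fun s => ∑ j ∈ Finset.Icc 1 m, iterLog (j+1) s)
      (∑ j ∈ Finset.Icc 1 m, r⁻¹ * iLP j r) r :=
    HasDerivAt.fun_sum (fun j hj => hasDerivAt_iterLog_succ hr j (Finset.mem_Icc.1 hj).2)
  have h3 := hasDerivAt_iterLog_succ hr m le_rfl
  have := (h1.sub (h2.const_mul (1/2:ℝ))).sub (h3.const_mul (ε/2))
  refine this.congr_deriv (Eq.symm ?_)
  have hs : (1:ℝ)/2 * ∑ j ∈ Finset.Icc 1 m, r⁻¹ * iLP j r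
      = r⁻¹ * (∑ k ∈ Finset.Icc 1 m, iLP k r) / 2 := by
    rw [Finset.mul_sum, Finset.mul_sum, Finset.sum_div]
    exact Finset.sum_congr rfl fun k _ => by ring
  simp only [Afun, Bfun, iLT]
  rw [hs]
  ring

lemma hasDerivAt_Bfun (d m : ℕ) (ε : ℝ) {r : ℝ} (hr : iterExp m < r) :
    HasDerivAt (Bfun d m ε) (Bder m ε r) r := by
  have hT := hasDerivAt_iLT hr
  have hP := hasDerivAt_iLP hr m le_rfl
  have : HasDerivAt (fun s => -((d:ℝ) + iLT m s + ε * iLP m s)/2)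
      (-((0:ℝ) + -(r⁻¹ * iLQ m r) + ε * -(r⁻¹ * iLP m r * iLT m r))/2) r := by
    exact (((hasDerivAt_const r ((d:ℝ))).add hT).add (hP.const_mul ε)).neg.div_const 2
  refine this.congr_deriv (Eq.symm ?_)
  rw [Bder]
  field_simp [ne_of_gt (rpos hr)]
  ring

lemma hasDerivAt_Afun (d m : ℕ) (ε : ℝ) {r : ℝ} (hr : iterExp m < r) :
    HasDerivAt (Afun d m ε) (Cfun d m ε r) r := by
  have := (hasDerivAt_inv (ne_of_gt (rpos hr))).mul (hasDerivAt_Bfun d m ε hr)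
  refine this.congr_deriv (Eq.symm ?_)
  rfl

def Efun (d m : ℕ) (ε : ℝ) (r : ℝ) : ℝ := Real.exp (hfun d m ε r)

lemma hasDerivAt_Efun (d m : ℕ) (ε : ℝ) {r : ℝ} (hr : iterExp m < r) :
    HasDerivAt (Efun d m ε) (Efun d m ε r * Afun d m ε r) r :=
  (hasDerivAt_hfun d m ε hr).exp

def Gfun (d m : ℕ) (ε : ℝ) (r : ℝ) : ℝ := Efun d m ε r * Afun d m ε r / (2*r)
def Gder (d m : ℕ) (ε : ℝ) (r : ℝ) : ℝ :=
  (Efun d m ε r * ((Afun d m ε r)^2 + Cfun d m ε r)) / (2*r)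
    - Efun d m ε r * Afun d m ε r / (2*r^2)

lemma hasDerivAt_Gfun (d m : ℕ) (ε : ℝ) {r : ℝ} (hr : iterExp m < r) :
    HasDerivAt (Gfun d m ε) (Gder d m ε r) r := by
  have hrne : r ≠ 0 := ne_of_gt (rpos hr)
  have h2r : (2:ℝ)*r ≠ 0 := by positivity
  have hinv : HasDerivAt (fun s : ℝ => (2*s)⁻¹) (-(2*1)/(2*r)^2) r :=
    ((hasDerivAt_id r).const_mul 2).inv h2r
  have := ((hasDerivAt_Efun d m ε hr).mul (hasDerivAt_Afun d m ε hr)).mul hinv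
  simp only [Pi.mul_apply] at this
  refine this.congr_deriv (Eq.symm ?_)
  simp only [Gder, Gfun]
  field_simp
  ring

def Ffun (d m : ℕ) (ε : ℝ) (u : ℝ) : ℝ := Efun d m ε (Real.sqrt u)
def F1 (d m : ℕ) (ε : ℝ) (u : ℝ) : ℝ := Gfun d m ε (Real.sqrt u)
def F2 (d m : ℕ) (ε : ℝ) (u : ℝ) : ℝ := Gder d m ε (Real.sqrt u) / (2 * Real.sqrt u)

lemma sqrt_mem {m : ℕ} {u : ℝ} (hu : (iterExp m)^2 < u) : iterExp m < Real.sqrt u := by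
  have h0 : (0:ℝ) < u := lt_of_le_of_lt (by positivity) hu
  rw [show iterExp m = Real.sqrt ((iterExp m)^2) from (Real.sqrt_sq (iterExp_pos m).le).symm]
  exact Real.sqrt_lt_sqrt (by positivity) hu

lemma upos {m : ℕ} {u : ℝ} (hu : (iterExp m)^2 < u) : 0 < u :=
  lt_of_le_of_lt (by positivity) hu

lemma hasDerivAt_Ffun (d m : ℕ) (ε : ℝ) {u : ℝ} (hu : (iterExp m)^2 < u) :
    HasDerivAt (Ffun d m ε) (F1 d m ε u) u := by
  have hs := sqrt_mem hu
  have hsq := Real.hasDerivAt_sqrt (ne_of_gt (upos hu))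
  have := (hasDerivAt_Efun d m ε hs).comp u hsq
  refine this.congr_deriv (Eq.symm ?_)
  simp only [F1, Gfun]
  field_simp

lemma hasDerivAt_F1 (d m : ℕ) (ε : ℝ) {u : ℝ} (hu : (iterExp m)^2 < u) :
    HasDerivAt (F1 d m ε) (F2 d m ε u) u := by
  have hs := sqrt_mem hu
  have hsq := Real.hasDerivAt_sqrt (ne_of_gt (upos hu))
  have := (hasDerivAt_Gfun d m ε hs).comp u hsq
  refine this.congr_deriv (Eq.symm ?_)
  simp only [F2]
  field_simp

lemma profile_eq (d m : ℕ) (ε : ℝ) {r : ℝ} (hr : iterExp m < r) :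
    (r ^ (-(d:ℝ)/2) * ∏ j ∈ Finset.Icc 1 m, (iterLog j r) ^ (-(1:ℝ)/2)) *
      (iterLog m r) ^ (-ε/2) = Efun d m ε r := by
  have hr0 : 0 < r := rpos hr
  have hLm : 0 < iterLog m r := iterLog_pos hr (by omega)
  have e1 : r ^ (-(d:ℝ)/2) = Real.exp (Real.log r * (-(d:ℝ)/2)) :=
    Real.rpow_def_of_pos hr0 _
  have e2 : ∏ j ∈ Finset.Icc 1 m, (iterLog j r) ^ (-(1:ℝ)/2)
      = Real.exp (∑ j ∈ Finset.Icc 1 m, iterLog (j+1) r * (-(1:ℝ)/2)) := by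
    rw [Real.exp_sum]
    exact Finset.prod_congr rfl fun j hj => by
      rw [Real.rpow_def_of_pos (iterLog_pos hr (by
        have := (Finset.mem_Icc.1 hj).2; omega))]
      rfl
  have e3 : (iterLog m r) ^ (-ε/2) = Real.exp (iterLog (m+1) r * (-ε/2)) := by
    rw [Real.rpow_def_of_pos hLm]
    rfl
  rw [e1, e2, e3, ← Real.exp_add, ← Real.exp_add, Efun, hfun]
  congr 1
  rw [show ∑ j ∈ Finset.Icc 1 m, iterLog (j+1) r * (-(1:ℝ)/2)
      = (-(1:ℝ)/2) * ∑ j ∈ Finset.Icc 1 m, iterLog (j+1) r from by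
    rw [Finset.mul_sum]; exact Finset.sum_congr rfl fun j _ => by ring]
  ring

lemma sum_prod_eq_iLT (m : ℕ) (r : ℝ) :
    ∑ j ∈ Finset.Icc 1 m, ∏ k ∈ Finset.Icc 1 j, (iterLog k r)⁻¹ = iLT m r := rfl

lemma double_sum_eq_iLQ (m : ℕ) (r : ℝ) :
    ∑ j ∈ Finset.Icc 1 m, ∑ l ∈ Finset.Icc 1 j,
      (∏ s ∈ Finset.Icc 1 l, (iterLog s r)⁻¹) * (∏ t ∈ Finset.Icc 1 j, (iterLog t r)⁻¹)
    = iLQ m r := by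
  refine Finset.sum_congr rfl fun j _ => ?_
  rw [← Finset.sum_mul]
  simp only [iLQ, iLP, iLT]
  ring

lemma prod_sq_eq (m : ℕ) (r : ℝ) :
    ∏ k ∈ Finset.Icc 1 m, ((iterLog k r) ^ 2)⁻¹ = (iLP m r)^2 := by
  simp only [iLP, ← Finset.prod_pow]
  exact Finset.prod_congr rfl fun k _ => by rw [inv_pow]

lemma final_value (d m : ℕ) (ε : ℝ) {r : ℝ} (hr : iterExp m < r) :
    4*r^2 * F2 d m ε (r^2) + 2*(d:ℝ) * F1 d m ε (r^2)
      = Ypot d m ε r * Efun d m ε r := by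
  have hr0 : 0 < r := rpos hr
  have hs : Real.sqrt (r^2) = r := Real.sqrt_sq hr0.le
  have hP : (∏ k ∈ Finset.Icc 1 m, (iterLog k r)⁻¹) = iLP m r := rfl
  have hlast : ∑ j ∈ Finset.Icc 1 m, iLP m r * (∏ t ∈ Finset.Icc 1 j, (iterLog t r)⁻¹)
      = iLP m r * iLT m r := by rw [← Finset.mul_sum]; rfl
  simp only [F2, F1, hs, Gder, Gfun, Afun, Cfun, Bfun, Bder, Ypot, Wpot,
    sum_prod_eq_iLT, double_sum_eq_iLQ, prod_sq_eq, hP, hlast]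
  field_simp
  ring

lemma laplacian_congr {d : ℕ} {f g : EuclideanSpace ℝ (Fin d) → ℝ}
    {x : EuclideanSpace ℝ (Fin d)} (h : f =ᶠ[nhds x] g) : laplacian f x = laplacian g x := by
  unfold laplacian
  refine Finset.sum_congr rfl fun i _ => ?_
  have h1 : (fun y => fderiv ℝ f y (EuclideanSpace.single i 1))
      =ᶠ[nhds x] (fun y => fderiv ℝ g y (EuclideanSpace.single i 1)) := by
    filter_upwards [h.eventuallyEq_nhds] with y hy
    rw [hy.fderiv_eq]
  rw [h1.fderiv_eq]

def qD {d : ℕ} (y : EuclideanSpace ℝ (Fin d)) :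
    EuclideanSpace ℝ (Fin d) →L[ℝ] ℝ :=
  (fderivInnerCLM ℝ ((y : EuclideanSpace ℝ (Fin d)), y)).comp
    ((ContinuousLinearMap.id ℝ _).prod (ContinuousLinearMap.id ℝ _))

lemma hqdiff {d : ℕ} (y : EuclideanSpace ℝ (Fin d)) :
    HasFDerivAt (fun z : EuclideanSpace ℝ (Fin d) => ‖z‖^2) (qD y) y := by
  have h := (hasFDerivAt_id (𝕜 := ℝ) y).inner ℝ (hasFDerivAt_id y)
  simp only [id_eq] at h
  have heq : (fun t : EuclideanSpace ℝ (Fin d) => (inner ℝ t t : ℝ))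
      = fun z : EuclideanSpace ℝ (Fin d) => ‖z‖^2 := by
    funext z; exact real_inner_self_eq_norm_sq z
  rw [heq] at h
  exact h

lemma hqapp {d : ℕ} (y : EuclideanSpace ℝ (Fin d)) (i : Fin d) :
    qD y (EuclideanSpace.single i 1) = 2 * y i := by
  simp only [qD, ContinuousLinearMap.comp_apply, ContinuousLinearMap.prod_apply,
    ContinuousLinearMap.id_apply, fderivInnerCLM_apply]
  rw [EuclideanSpace.inner_single_right, EuclideanSpace.inner_single_left]
  simp
  ring

lemma laplacian_radial {d : ℕ} (F F₁ F₂ : ℝ → ℝ) (U : Set ℝ) (hU : IsOpen U)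
    (hF : ∀ u ∈ U, HasDerivAt F (F₁ u) u) (hF1 : ∀ u ∈ U, HasDerivAt F₁ (F₂ u) u)
    (x : EuclideanSpace ℝ (Fin d)) (hx : ‖x‖^2 ∈ U) :
    laplacian (fun y => F (‖y‖^2)) x
      = 4 * ‖x‖^2 * F₂ (‖x‖^2) + 2*(d:ℝ)*F₁ (‖x‖^2) := by
  classical
  have hVopen : IsOpen {y : EuclideanSpace ℝ (Fin d) | ‖y‖^2 ∈ U} :=
    hU.preimage (by continuity)
  have hVx : x ∈ {y : EuclideanSpace ℝ (Fin d) | ‖y‖^2 ∈ U} := hx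
  have hfd : ∀ y : EuclideanSpace ℝ (Fin d), ‖y‖^2 ∈ U →
      HasFDerivAt (fun z => F (‖z‖^2)) (F₁ (‖y‖^2) • qD y) y := fun y hy =>
    (hF _ hy).comp_hasFDerivAt y (hqdiff y)
  have key : ∀ i : Fin d,
      fderiv ℝ (fun y => fderiv ℝ (fun z : EuclideanSpace ℝ (Fin d) => F (‖z‖^2)) y
        (EuclideanSpace.single i 1)) x (EuclideanSpace.single i 1)
      = 4 * F₂ (‖x‖^2) * (x i)^2 + 2 * F₁ (‖x‖^2) := by
    intro i
    have heq : (fun y => fderiv ℝ (fun z : EuclideanSpace ℝ (Fin d) => F (‖z‖^2)) y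
          (EuclideanSpace.single i 1))
        =ᶠ[nhds x] (fun y => F₁ (‖y‖^2) * (2 * y i)) := by
      filter_upwards [hVopen.mem_nhds hVx] with y hy
      rw [(hfd y hy).fderiv]
      simp [hqapp]
    rw [heq.fderiv_eq]
    have h1 : HasFDerivAt (fun y : EuclideanSpace ℝ (Fin d) => F₁ (‖y‖^2))
        (F₂ (‖x‖^2) • qD x) x := (hF1 _ hx).comp_hasFDerivAt x (hqdiff x)
    have h2 : HasFDerivAt (fun y : EuclideanSpace ℝ (Fin d) => (2:ℝ) * y i)
        ((2:ℝ) • (EuclideanSpace.proj i : EuclideanSpace ℝ (Fin d) →L[ℝ] ℝ)) x :=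
      HasFDerivAt.const_mul
        (ContinuousLinearMap.hasFDerivAt
          (EuclideanSpace.proj i : EuclideanSpace ℝ (Fin d) →L[ℝ] ℝ) (x := x)) (2:ℝ)
    have h3 := h1.mul h2
    change HasFDerivAt (fun y : EuclideanSpace ℝ (Fin d) => F₁ (‖y‖^2) * (2 * y i)) _ x at h3
    rw [h3.fderiv]
    simp only [ContinuousLinearMap.add_apply, ContinuousLinearMap.smul_apply, hqapp,
      smul_eq_mul]
    have hproj : (EuclideanSpace.proj i : EuclideanSpace ℝ (Fin d) →L[ℝ] ℝ)
        (EuclideanSpace.single i 1) = 1 := by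
      show (EuclideanSpace.single i 1 : EuclideanSpace ℝ (Fin d)) i = 1
      simp
    rw [hproj]
    ring
  unfold laplacian
  rw [Finset.sum_congr rfl fun i _ => key i]
  rw [Finset.sum_add_distrib, Finset.sum_const]
  have hsum : ∑ i : Fin d, 4 * F₂ (‖x‖^2) * (x i)^2 = 4 * ‖x‖^2 * F₂ (‖x‖^2) := by
    rw [← Finset.mul_sum]
    have : ∑ i : Fin d, (x i)^2 = ‖x‖^2 := by
      rw [EuclideanSpace.norm_eq, Real.sq_sqrt (by positivity)]
      exact Finset.sum_congr rfl fun i _ => by rw [Real.norm_eq_abs, sq_abs]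
    rw [this]; ring
  rw [hsum]
  simp
  ring


/-- The comparison function
`ψ_{u,m,ε}(x) = |x|^{−d/2} (Π_{j=1}^m ln_j(|x|)^{−1/2}) ln_m(|x|)^{−ε/2}` is smooth on
`{|x| > e_m}` and satisfies `Δψ_{u,m,ε} = Y_{m,ε} ψ_{u,m,ε}` there. -/
theorem psi_u_eigenvalue_equation (d : ℕ) (hd : 1 ≤ d) (m : ℕ) (hm : 1 ≤ m) (ε : ℝ)
    (hε : 0 < ε) :
    ContDiffOn ℝ (⊤ : ℕ∞)
      (fun x : EuclideanSpace ℝ (Fin d) =>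
        (‖x‖ ^ (-(d : ℝ) / 2) * ∏ j ∈ Finset.Icc 1 m, (iterLog j ‖x‖) ^ (-(1 : ℝ) / 2)) *
          (iterLog m ‖x‖) ^ (-ε / 2))
      {x : EuclideanSpace ℝ (Fin d) | iterExp m < ‖x‖} ∧
    ∀ x : EuclideanSpace ℝ (Fin d), iterExp m < ‖x‖ →
      laplacian
        (fun x : EuclideanSpace ℝ (Fin d) =>
          (‖x‖ ^ (-(d : ℝ) / 2) * ∏ j ∈ Finset.Icc 1 m, (iterLog j ‖x‖) ^ (-(1 : ℝ) / 2)) *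
            (iterLog m ‖x‖) ^ (-ε / 2)) x
      = Ypot d m ε ‖x‖ *
        ((‖x‖ ^ (-(d : ℝ) / 2) * ∏ j ∈ Finset.Icc 1 m, (iterLog j ‖x‖) ^ (-(1 : ℝ) / 2)) *
          (iterLog m ‖x‖) ^ (-ε / 2)) := by
  have hopen : IsOpen {x : EuclideanSpace ℝ (Fin d) | iterExp m < ‖x‖} :=
    isOpen_lt continuous_const continuous_norm
  have hdiv : ∀ r : ℝ, -(d : ℝ) / 2 = -(d : ℝ) / 2 := fun _ => rfl
  constructor
  · intro x hx
    have hx' : iterExp m < ‖x‖ := hx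
    have hxne : x ≠ 0 := by
      intro h
      rw [h, norm_zero] at hx'
      exact absurd hx' (not_lt.2 (iterExp_pos m).le)
    have hnorm : ContDiffAt ℝ (⊤ : ℕ∞) (fun y : EuclideanSpace ℝ (Fin d) => ‖y‖) x :=
      contDiffAt_norm ℝ hxne
    have hL : ∀ k, k ≤ m+1 →
        ContDiffAt ℝ (⊤ : ℕ∞) (fun y : EuclideanSpace ℝ (Fin d) => iterLog k ‖y‖) x :=
      fun k hk => (contDiffAt_iterLog k
        (fun i hi => ne_of_gt (iterLog_pos hx' (by omega)))).comp x hnorm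
    have hlog : ContDiffAt ℝ (⊤ : ℕ∞) (fun y : EuclideanSpace ℝ (Fin d) => Real.log ‖y‖) x :=
      hL 1 (by omega)
    have hsum : ContDiffAt ℝ (⊤ : ℕ∞)
        (fun y : EuclideanSpace ℝ (Fin d) => ∑ j ∈ Finset.Icc 1 m, iterLog (j+1) ‖y‖) x :=
      ContDiffAt.sum fun j hj => hL (j+1) (by
        have := (Finset.mem_Icc.1 hj).2; omega)
    have hh : ContDiffAt ℝ (⊤ : ℕ∞)
        (fun y : EuclideanSpace ℝ (Fin d) => hfun d m ε ‖y‖) x := by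
      simp only [hfun]
      exact ((contDiffAt_const.mul hlog).sub (contDiffAt_const.mul hsum)).sub
        ((hL (m+1) le_rfl).const_smul (ε/2) |>.congr_of_eventuallyEq (by
          filter_upwards with y; simp [smul_eq_mul]))
    have hE : ContDiffAt ℝ (⊤ : ℕ∞)
        (fun y : EuclideanSpace ℝ (Fin d) => Efun d m ε ‖y‖) x := by
      simp only [Efun]
      exact Real.contDiff_exp.contDiffAt.comp x hh
    have hevent : (fun y : EuclideanSpace ℝ (Fin d) =>
        (‖y‖ ^ (-(d : ℝ) / 2) * ∏ j ∈ Finset.Icc 1 m, (iterLog j ‖y‖) ^ (-(1 : ℝ) / 2)) *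
          (iterLog m ‖y‖) ^ (-ε / 2))
        =ᶠ[nhds x] (fun y => Efun d m ε ‖y‖) := by
      filter_upwards [hopen.mem_nhds hx] with y hy
      exact profile_eq d m ε hy
    exact (hE.congr_of_eventuallyEq hevent).contDiffWithinAt
  · intro x hx
    have hx2 : ‖x‖^2 ∈ Set.Ioi ((iterExp m)^2) := by
      have := pow_lt_pow_left₀ hx (iterExp_pos m).le (n := 2) (by norm_num)
      exact this
    have h1 : (fun y : EuclideanSpace ℝ (Fin d) =>
        (‖y‖ ^ (-(d : ℝ) / 2) * ∏ j ∈ Finset.Icc 1 m, (iterLog j ‖y‖) ^ (-(1 : ℝ) / 2)) *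
          (iterLog m ‖y‖) ^ (-ε / 2))
        =ᶠ[nhds x] (fun y => Ffun d m ε (‖y‖^2)) := by
      filter_upwards [hopen.mem_nhds hx] with y hy
      rw [profile_eq d m ε hy]
      simp only [Ffun]
      rw [Real.sqrt_sq (norm_nonneg y)]
    rw [laplacian_congr h1,
      laplacian_radial (Ffun d m ε) (F1 d m ε) (F2 d m ε) (Set.Ioi ((iterExp m)^2)) isOpen_Ioi
        (fun u hu => hasDerivAt_Ffun d m ε hu) (fun u hu => hasDerivAt_F1 d m ε hu) x hx2,
      profile_eq d m ε hx]
    exact final_value d m ε hx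

end
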